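/- arXiv:1910.03968 — 4 statements merged into one kernel-verified Lean document; each statement's English description precedes it below -/
import Mathlib

section
/- Let V be a real inner product space of finite dimension n ≥ 2, let T : V → V be a self-adjoint linear operator, and let λ1 ≤ λ2 ≤ ⋯ ≤ λn be the eigenvalues of T listed with multiplicity. Let V1 = ker(T − λ1·Id) and V2 = ker(T − λ2·Id). Then a vector v ∈ V belongs to V1 + V2 if and only if there exist orthonormal vectors e1, e2 ∈ V with ⟨T e1, e1⟩ + ⟨T e2, e2⟩ = λ1 + λ2 such that v lies in the span of {e1, e2}. -/
/-!
In the eigenbasis, `⟪T e1, e1⟫ + ⟪T e2, e2⟫ = ∑ λᵢ wᵢ` with weights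
`wᵢ = ⟪bᵢ, e1⟫² + ⟪bᵢ, e2⟫²` that lie in `[0, 1]` (Bessel) and sum to `2` (Parseval).
Such a sum is at least `λ₁ + λ₂`, with equality only if `wᵢ = 0` whenever `λᵢ > λ₂`, which
puts `e1` and `e2` in `V1 + V2`. Conversely, a vector of `V1 + V2` lies in the span of a unit
vector of `V1` and an orthogonal unit vector of `V2`: eigenspaces of distinct eigenvalues are
orthogonal, and if `λ₁ = λ₂` the common eigenspace has dimension at least `2`.
-/

open RealInnerProductSpace Module.End

theorem weight_eq_zero_of_sum_mul_eq {ι : Type*} [Fintype ι] {lam w : ι → ℝ} {i0 : ι} {μ : ℝ}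
    (hi0 : lam i0 ≤ μ) (hlow : ∀ i, i ≠ i0 → μ ≤ lam i) (hw : ∀ i, 0 ≤ w i) (hw0 : w i0 ≤ 1)
    (hsum : ∑ i, w i = 2) (heq : ∑ i, lam i * w i = lam i0 + μ) {i : ι} (hi : μ < lam i) :
    w i = 0 := by
  classical
  have hii0 : i ≠ i0 := by rintro rfl; linarith
  have hnonneg : ∀ j ∈ Finset.univ.erase i0, 0 ≤ (lam j - μ) * w j := fun j hj =>
    mul_nonneg (sub_nonneg.2 (hlow j (Finset.ne_of_mem_erase hj))) (hw j)
  have hrest : ∑ j ∈ Finset.univ.erase i0, (lam j - μ) * w j = (lam i0 - μ) * (1 - w i0) := by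
    have htotal : ∑ j, (lam j - μ) * w j = lam i0 - μ := by
      simp only [sub_mul, Finset.sum_sub_distrib, ← Finset.mul_sum, heq, hsum]
      ring
    rw [← Finset.add_sum_erase _ _ (Finset.mem_univ i0)] at htotal
    linarith
  have hzero : (lam i - μ) * w i = 0 := by
    refine (Finset.sum_eq_zero_iff_of_nonneg hnonneg).1 (le_antisymm ?_ (Finset.sum_nonneg hnonneg))
      i (Finset.mem_erase.2 ⟨hii0, Finset.mem_univ i⟩)
    rw [hrest]
    exact mul_nonpos_of_nonpos_of_nonneg (by linarith) (by linarith)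
  exact (mul_eq_zero.1 hzero).resolve_left (sub_ne_zero.2 hi.ne')

theorem OrthonormalBasis.mem_of_forall_inner_eq_zero {ι 𝕜 E : Type*} [Fintype ι] [RCLike 𝕜]
    [NormedAddCommGroup E] [InnerProductSpace 𝕜 E] (b : OrthonormalBasis ι 𝕜 E)
    {W : Submodule 𝕜 E} {x : E} (h : ∀ i, b i ∉ W → inner 𝕜 (b i) x = 0) : x ∈ W := by
  rw [← b.sum_repr' x]
  refine W.sum_mem fun i _ => ?_
  by_cases hi : b i ∈ W
  · exact W.smul_mem _ hi
  · simp [h i hi]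

section

variable {V : Type*} [NormedAddCommGroup V] [InnerProductSpace ℝ V]

theorem orthonormal_pair {x y : V} (hx : ‖x‖ = 1) (hy : ‖y‖ = 1) (hxy : ⟪x, y⟫ = 0) :
    Orthonormal ℝ ![x, y] := by
  rw [orthonormal_iff_ite]
  intro i j
  fin_cases i <;> fin_cases j <;>
    simp [hxy, real_inner_comm x y, hx, hy]

theorem inner_sq_add_inner_sq_le {x y : V} (hx : ‖x‖ = 1) (hy : ‖y‖ = 1) (hxy : ⟪x, y⟫ = 0)
    (z : V) : ⟪x, z⟫ ^ 2 + ⟪y, z⟫ ^ 2 ≤ ‖z‖ ^ 2 := by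
  simpa [Fin.sum_univ_two, sq_abs] using
    (orthonormal_pair hx hy hxy).sum_inner_products_le z (s := Finset.univ)

theorem two_le_finrank_of_orthonormal_mem [FiniteDimensional ℝ V] {K : Submodule ℝ V}
    {x y : V} (hxK : x ∈ K) (hyK : y ∈ K) (hx : ‖x‖ = 1) (hy : ‖y‖ = 1) (hxy : ⟪x, y⟫ = 0) :
    2 ≤ Module.finrank ℝ K := by
  have hspan : Submodule.span ℝ (Set.range ![x, y]) ≤ K := by
    simp [Submodule.span_le, Set.insert_subset_iff, hxK, hyK]
  calc 2 = Module.finrank ℝ (Submodule.span ℝ (Set.range ![x, y])) := by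
        rw [finrank_span_eq_card (orthonormal_pair hx hy hxy).linearIndependent,
          Fintype.card_fin]
    _ ≤ Module.finrank ℝ K := Submodule.finrank_mono hspan

theorem Submodule.exists_norm_eq_one_mem_span_singleton {K : Submodule ℝ V} (hK : K ≠ ⊥)
    {x : V} (hx : x ∈ K) :
    ∃ e ∈ K, ‖e‖ = 1 ∧ x ∈ ℝ ∙ e := by
  obtain ⟨w, hwK, hw0, hxw⟩ : ∃ w ∈ K, w ≠ 0 ∧ x ∈ ℝ ∙ w := by
    by_cases hx0 : x = 0
    · obtain ⟨w, hwK, hw0⟩ := K.ne_bot_iff.1 hK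
      exact ⟨w, hwK, hw0, hx0 ▸ (ℝ ∙ w).zero_mem⟩
    · exact ⟨x, hx, hx0, Submodule.mem_span_singleton_self x⟩
  refine ⟨‖w‖⁻¹ • w, K.smul_mem _ hwK, norm_smul_inv_norm hw0, ?_⟩
  rwa [Submodule.span_singleton_smul_eq (by simpa using hw0)]

theorem Submodule.exists_orthonormal_pair_mem_span [FiniteDimensional ℝ V] {K : Submodule ℝ V}
    (hK : 2 ≤ Module.finrank ℝ K) {x : V} (hx : x ∈ K) :
    ∃ e1 ∈ K, ∃ e2 ∈ K, ‖e1‖ = 1 ∧ ‖e2‖ = 1 ∧ ⟪e1, e2⟫ = 0 ∧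
      x ∈ Submodule.span ℝ ({e1, e2} : Set V) := by
  have hK0 : K ≠ ⊥ := by
    rintro rfl
    rw [finrank_bot] at hK
    omega
  obtain ⟨e1, he1K, he1, hxe1⟩ := exists_norm_eq_one_mem_span_singleton hK0 hx
  have hperp : (ℝ ∙ e1)ᗮ ⊓ K ≠ ⊥ := by
    have := Submodule.finrank_add_inf_finrank_orthogonal
      ((Submodule.span_singleton_le_iff_mem _ _).2 he1K)
    intro h
    have he1ne : e1 ≠ 0 := norm_ne_zero_iff.1 (he1.trans_ne one_ne_zero)
    rw [h, finrank_bot, finrank_span_singleton he1ne] at this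
    omega
  obtain ⟨e2, he2, he2n, -⟩ := exists_norm_eq_one_mem_span_singleton hperp (zero_mem _)
  refine ⟨e1, he1K, e2, (Submodule.mem_inf.1 he2).2, he1, he2n,
    Submodule.mem_orthogonal_singleton_iff_inner_right.1 (Submodule.mem_inf.1 he2).1, ?_⟩
  exact Submodule.span_mono (by simp) hxe1

variable {ι : Type*} [Fintype ι] {T : V →ₗ[ℝ] V}

theorem inner_map_self_eq_of_mem_eigenspace {μ : ℝ} {x : V} (hx : x ∈ eigenspace T μ)
    (hx1 : ‖x‖ = 1) : ⟪T x, x⟫ = μ := by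
  rw [mem_eigenspace_iff.1 hx, real_inner_smul_left, real_inner_self_eq_norm_sq, hx1]
  ring

theorem LinearMap.IsSymmetric.inner_map_self_eq_sum (hT : T.IsSymmetric)
    (b : OrthonormalBasis ι ℝ V) {lam : ι → ℝ} (heig : ∀ i, T (b i) = lam i • b i) (x : V) :
    ⟪T x, x⟫ = ∑ i, lam i * ⟪b i, x⟫ ^ 2 := by
  rw [← b.sum_inner_mul_inner (T x) x]
  refine Finset.sum_congr rfl fun i _ => ?_
  rw [hT, heig, real_inner_smul_right, real_inner_comm (b i) x]
  ring

variable {lam : ι → ℝ} {i0 i1 : ι}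

theorem exists_orthonormal_mem_eigenspace_of_mem_sup [FiniteDimensional ℝ V]
    (hT : T.IsSymmetric) (b : OrthonormalBasis ι ℝ V) (heig : ∀ i, T (b i) = lam i • b i)
    (hne : i0 ≠ i1) {v : V}
    (hv : v ∈ eigenspace T (lam i0) ⊔ eigenspace T (lam i1)) :
    ∃ e1 ∈ eigenspace T (lam i0), ∃ e2 ∈ eigenspace T (lam i1), ‖e1‖ = 1 ∧ ‖e2‖ = 1 ∧
      ⟪e1, e2⟫ = 0 ∧ v ∈ Submodule.span ℝ ({e1, e2} : Set V) := by
  have hb : ∀ i, b i ∈ eigenspace T (lam i) := fun i => mem_eigenspace_iff.2 (heig i)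
  have hbn : ∀ i, ‖b i‖ = 1 := b.orthonormal.1
  have hb01 : ⟪b i0, b i1⟫ = 0 := b.orthonormal.2 hne
  by_cases hlam : lam i0 = lam i1
  · rw [hlam] at hv ⊢
    rw [sup_idem] at hv
    refine Submodule.exists_orthonormal_pair_mem_span ?_ hv
    exact two_le_finrank_of_orthonormal_mem (hlam ▸ hb i0) (hb i1) (hbn i0) (hbn i1) hb01
  · obtain ⟨v1, hv1, v2, hv2, rfl⟩ := Submodule.mem_sup.1 hv
    obtain ⟨e1, he1, he1n, hv1e⟩ := Submodule.exists_norm_eq_one_mem_span_singleton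
      (Submodule.ne_bot_iff _ |>.2 ⟨b i0, hb i0, b.orthonormal.ne_zero i0⟩) hv1
    obtain ⟨e2, he2, he2n, hv2e⟩ := Submodule.exists_norm_eq_one_mem_span_singleton
      (Submodule.ne_bot_iff _ |>.2 ⟨b i1, hb i1, b.orthonormal.ne_zero i1⟩) hv2
    refine ⟨e1, he1, e2, he2, he1n, he2n,
      hT.orthogonalFamily_eigenspaces hlam ⟨e1, he1⟩ ⟨e2, he2⟩, Submodule.add_mem _ ?_ ?_⟩
    · exact Submodule.span_mono (by simp) hv1e
    · exact Submodule.span_mono (by simp) hv2e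

theorem span_le_sup_eigenspace_of_inner_map_add_eq (hT : T.IsSymmetric)
    (b : OrthonormalBasis ι ℝ V) (heig : ∀ i, T (b i) = lam i • b i) (hi0 : lam i0 ≤ lam i1)
    (hlow : ∀ i, i ≠ i0 → lam i1 ≤ lam i) {e1 e2 : V} (he1 : ‖e1‖ = 1) (he2 : ‖e2‖ = 1)
    (he12 : ⟪e1, e2⟫ = 0) (hsum : ⟪T e1, e1⟫ + ⟪T e2, e2⟫ = lam i0 + lam i1) :
    Submodule.span ℝ ({e1, e2} : Set V) ≤ eigenspace T (lam i0) ⊔ eigenspace T (lam i1) := by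
  set w : ι → ℝ := fun i => ⟪b i, e1⟫ ^ 2 + ⟪b i, e2⟫ ^ 2
  have hw0 : w i0 ≤ 1 := by
    simpa [w, real_inner_comm, b.orthonormal.1 i0] using
      inner_sq_add_inner_sq_le he1 he2 he12 (b i0)
  have hsumw : ∑ i, w i = 2 := by
    simp only [w, Finset.sum_add_distrib, b.sum_sq_inner_right, he1, he2]
    norm_num
  have heq : ∑ i, lam i * w i = lam i0 + lam i1 := by
    simp only [w, mul_add, Finset.sum_add_distrib, ← hT.inner_map_self_eq_sum b heig, hsum]
  have horth : ∀ i, lam i1 < lam i → ⟪b i, e1⟫ = 0 ∧ ⟪b i, e2⟫ = 0 := by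
    intro i hi
    have := weight_eq_zero_of_sum_mul_eq hi0 hlow (fun i => by positivity) hw0 hsumw heq hi
    constructor <;> nlinarith [sq_nonneg ⟪b i, e1⟫, sq_nonneg ⟪b i, e2⟫]
  have hbsup : ∀ i, b i ∉ eigenspace T (lam i0) ⊔ eigenspace T (lam i1) → lam i1 < lam i := by
    intro i hi
    have hii0 : i ≠ i0 := by
      rintro rfl
      exact hi (Submodule.mem_sup_left (mem_eigenspace_iff.2 (heig i)))
    refine lt_of_le_of_ne (hlow i hii0) fun h => hi (Submodule.mem_sup_right ?_)
    exact mem_eigenspace_iff.2 (h ▸ heig i)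
  rw [Submodule.span_le, Set.insert_subset_iff, Set.singleton_subset_iff]
  exact ⟨b.mem_of_forall_inner_eq_zero fun i hi => (horth i (hbsup i hi)).1,
    b.mem_of_forall_inner_eq_zero fun i hi => (horth i (hbsup i hi)).2⟩

end

/-- With `T` self-adjoint on an `n ≥ 2`-dimensional real inner product
space, eigenvalues `lam 0 ≤ lam 1 ≤ ⋯` listed with multiplicity, and
`V1 = ker(T - λ1·Id)`, `V2 = ker(T - λ2·Id)`, a vector `v` lies in `V1 + V2` iff
there are orthonormal `e1, e2` with `⟪T e1, e1⟫ + ⟪T e2, e2⟫ = λ1 + λ2` and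
`v ∈ span {e1, e2}`. -/
theorem stmt1 {V : Type*} [NormedAddCommGroup V] [InnerProductSpace ℝ V]
    [FiniteDimensional ℝ V]
    {n : ℕ} (hn : 2 ≤ n)
    (T : V →ₗ[ℝ] V) (hT : T.IsSymmetric)
    (lam : Fin n → ℝ) (hmono : Monotone lam)
    (b : OrthonormalBasis (Fin n) ℝ V)
    (heig : ∀ i, T (b i) = lam i • b i)
    (V1 V2 : Submodule ℝ V)
    (hV1 : V1 = LinearMap.ker (T - lam ⟨0, by omega⟩ • LinearMap.id))
    (hV2 : V2 = LinearMap.ker (T - lam ⟨1, by omega⟩ • LinearMap.id))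
    (v : V) :
    v ∈ V1 ⊔ V2 ↔
      ∃ e1 e2 : V, ‖e1‖ = 1 ∧ ‖e2‖ = 1 ∧ ⟪e1, e2⟫ = 0 ∧
        ⟪T e1, e1⟫ + ⟪T e2, e2⟫ = lam ⟨0, by omega⟩ + lam ⟨1, by omega⟩ ∧
        v ∈ Submodule.span ℝ ({e1, e2} : Set V) := by
  have hlow : ∀ i, i ≠ ⟨0, by omega⟩ → lam ⟨1, by omega⟩ ≤ lam i := fun i hi =>
    hmono (Fin.mk_le_of_le_val (Nat.one_le_iff_ne_zero.2 fun h => hi (Fin.ext h)))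
  simp only [← Module.End.one_eq_id, ← eigenspace_def] at hV1 hV2
  subst hV1 hV2
  constructor
  · intro hv
    obtain ⟨e1, he1, e2, he2, he1n, he2n, he12, hve⟩ :=
      exists_orthonormal_mem_eigenspace_of_mem_sup hT b heig (by simp [Fin.ext_iff]) hv
    refine ⟨e1, e2, he1n, he2n, he12, ?_, hve⟩
    rw [inner_map_self_eq_of_mem_eigenspace he1 he1n, inner_map_self_eq_of_mem_eigenspace he2 he2n]
  · rintro ⟨e1, e2, he1n, he2n, he12, hsum, hve⟩
    exact span_le_sup_eigenspace_of_inner_map_add_eq hT b heig (hmono (by simp [Fin.le_def])) hlow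
      he1n he2n he12 hsum hve
end

section
/- Let E be a finite-dimensional real inner product space and let Ω ⊆ E be a nonempty, unbounded convex set. Then there exists a unit vector ω ∈ E with the following two properties: (1) for every x in the closure of Ω and every s ≥ 0, the point x − s ω belongs to the closure of Ω; (2) for every q in the closure of Ω and every ν ∈ E such that ⟨x − q, ν⟩ ≤ 0 for all x ∈ Ω, one has ⟨ν, ω⟩ ≥ 0. -/
/-!
Fix `x₀ ∈ Ω`. Since `Ω` is unbounded, the unit vectors pointing from `x₀` to far-away points
of `Ω` have a cluster point `ω` on the (compact) unit sphere, and by convexity the ray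
`x₀ + ℝ≥0 • ω` lies in `closure Ω`. A closed convex set containing one ray in direction `ω`
contains the ray in direction `ω` from each of its points, which gives (1) with direction `-ω`;
for (2), `q + ω ∈ closure Ω` lies in the closed half-space `{x | ⟪x - q, ν⟫ ≤ 0}`.
-/

open RealInnerProductSpace Filter Topology Bornology

theorem Convex.add_smul_mem_of_forall_add_smul_mem {E : Type*} [AddCommGroup E] [Module ℝ E]
    [TopologicalSpace E] [IsTopologicalAddGroup E] [ContinuousSMul ℝ E] {C : Set E}
    (hC : Convex ℝ C) (hCc : IsClosed C) {x₀ ω : E} (hray : ∀ t : ℝ, 0 ≤ t → x₀ + t • ω ∈ C)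
    {y : E} (hy : y ∈ C) {t : ℝ} (ht : 0 ≤ t) : y + t • ω ∈ C := by
  -- `y + t • ω` is the limit, as `a → 0⁺`, of points on the chord from `y` to `x₀ + (t / a) • ω`
  have hlim : Tendsto (fun a : ℝ => y + a • (x₀ - y) + t • ω) (𝓝[>] 0) (𝓝 (y + t • ω)) := by
    have : Continuous fun a : ℝ => y + a • (x₀ - y) + t • ω := by fun_prop
    simpa using (this.tendsto 0).mono_left nhdsWithin_le_nhds
  refine hCc.mem_of_tendsto hlim ?_
  filter_upwards [Ioc_mem_nhdsGT zero_lt_one] with a ⟨ha₀, ha₁⟩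
  have hchord := hC.add_smul_sub_mem hy (hray (t / a) (by positivity)) ⟨ha₀.le, ha₁⟩
  rwa [add_sub_right_comm, smul_add, smul_smul, mul_div_cancel₀ t ha₀.ne', ← add_assoc] at hchord

theorem Convex.exists_norm_eq_one_add_smul_mem_closure {E : Type*} [NormedAddCommGroup E]
    [NormedSpace ℝ E] [ProperSpace E] {s : Set E} (hs : Convex ℝ s) {x₀ : E} (hx₀ : x₀ ∈ s)
    (hub : ¬IsBounded s) : ∃ ω : E, ‖ω‖ = 1 ∧ ∀ t : ℝ, 0 ≤ t → x₀ + t • ω ∈ closure s := by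
  set F := cobounded E ⊓ 𝓟 s
  have : F.NeBot := frequently_mem_iff_neBot.1 fun h => hub (isBounded_def.2 h)
  have hfar : ∀ r : ℝ, ∀ᶠ x in F, r ≤ ‖x - x₀‖ := fun r => by
    filter_upwards [mem_inf_of_left (eventually_cobounded_le_norm (r + ‖x₀‖))] with x hx
    linarith [norm_sub_norm_le x x₀]
  set u : E → E := fun x => ‖x - x₀‖⁻¹ • (x - x₀)
  obtain ⟨ω, hω, hclus⟩ :=
      (isCompact_sphere (0 : E) 1).exists_mapClusterPt (f := F) (u := u) <| by
      refine tendsto_principal.2 ?_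
      filter_upwards [hfar 1] with x hx
      have : x - x₀ ≠ 0 := by rintro h; norm_num [h] at hx
      simp [u, norm_smul, this]
  refine ⟨ω, mem_sphere_zero_iff_norm.1 hω, fun t ht => ?_⟩
  have hclus_t : MapClusterPt (x₀ + t • ω) F (fun x => x₀ + t • u x) :=
    hclus.continuousAt_comp (f := fun v => x₀ + t • v) (by fun_prop)
  refine hclus_t.clusterPt.mem_closure_of_mem (s := s) (mem_map.2 ?_)
  filter_upwards [hfar t, mem_inf_of_right (mem_principal_self s)] with x hxt hxs
  have hcoef : t / ‖x - x₀‖ ∈ Set.Icc (0 : ℝ) 1 :=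
    ⟨by positivity, div_le_one_of_le₀ hxt (norm_nonneg _)⟩
  simpa only [Set.mem_preimage, u, smul_smul, div_eq_mul_inv] using
    hs.add_smul_sub_mem hx₀ hxs hcoef

theorem inner_sub_nonpos_of_mem_closure {E : Type*} [NormedAddCommGroup E]
    [InnerProductSpace ℝ E] {s : Set E} {q ν : E} (h : ∀ x ∈ s, ⟪x - q, ν⟫ ≤ 0) {x : E}
    (hx : x ∈ closure s) : ⟪x - q, ν⟫ ≤ 0 :=
  closure_minimal h (isClosed_le (f := fun x => ⟪x - q, ν⟫) (by fun_prop) continuous_const) hx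

/-- If `Ω` is a nonempty unbounded convex subset of a
finite-dimensional real inner product space, then there is a unit vector `ω` such
that (1) `closure Ω` is invariant under translation by `-s • ω` for all `s ≥ 0`,
and (2) every outward supporting normal `ν` of `Ω` at a closure point `q`
satisfies `⟪ν, ω⟫ ≥ 0`. -/
theorem stmt6 {E : Type*} [NormedAddCommGroup E] [InnerProductSpace ℝ E]
    [FiniteDimensional ℝ E]
    (Ω : Set E) (hne : Ω.Nonempty) (hub : ¬ Bornology.IsBounded Ω)
    (hconv : Convex ℝ Ω) :
    ∃ ω : E, ‖ω‖ = 1 ∧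
      (∀ x ∈ closure Ω, ∀ s : ℝ, 0 ≤ s → x - s • ω ∈ closure Ω) ∧
      (∀ q ∈ closure Ω, ∀ ν : E, (∀ x ∈ Ω, ⟪x - q, ν⟫ ≤ 0) → 0 ≤ ⟪ν, ω⟫) := by
  obtain ⟨x₀, hx₀⟩ := hne
  obtain ⟨ω, hω, hray⟩ := hconv.exists_norm_eq_one_add_smul_mem_closure hx₀ hub
  have hrec : ∀ y ∈ closure Ω, ∀ t : ℝ, 0 ≤ t → y + t • ω ∈ closure Ω := fun y hy t ht =>
    hconv.closure.add_smul_mem_of_forall_add_smul_mem isClosed_closure hray hy ht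
  refine ⟨-ω, by rwa [norm_neg], fun y hy t ht => ?_, fun q hq ν hν => ?_⟩
  · simpa only [smul_neg, sub_neg_eq_add] using hrec y hy t ht
  · have hinner := inner_sub_nonpos_of_mem_closure hν (hrec q hq 1 zero_le_one)
    rw [one_smul, add_sub_cancel_left, real_inner_comm] at hinner
    rw [inner_neg_right]
    linarith
end

section
/- Let E be a finite-dimensional real inner product space, a > 0, and let γ : [0, a] → E be a twice continuously differentiable curve parametrized by arc length, i.e. ‖γ'(s)‖ = 1 for all s, with γ(0) = p. Let ν ∈ E be a unit vector with ⟨γ'(0), ν⟩ = 0, and suppose ‖γ''(s)‖ ≤ κ for all s ∈ [0, a], for some κ > 0. If R > 0 satisfies a ≤ R and 2 R κ < 1, then ‖γ(s) − (p − R ν)‖ ≥ R for all s ∈ [0, a]; that is, the curve never enters the open ball of radius R centered at p − R ν. -/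
/-! With `q = p - R • ν`, the squared distance `f s = ‖γ s - q‖²` satisfies `f 0 = R²` and
`f' 0 = 2 ⟪R • ν, γ' 0⟫ = 0`, while `f'' = 2 (⟪γ - q, γ''⟫ + 1) ≥ 2 (1 - 2 R κ) > 0` because the
unit-speed curve stays within distance `s + R ≤ 2 R` of `q`. Hence `f` is nondecreasing and never
drops below `R²`. -/

open RealInnerProductSpace Set

theorem monotoneOn_Icc_of_hasDerivWithinAt_nonneg {f f' : ℝ → ℝ} {a b : ℝ}
    (hf : ∀ x ∈ Icc a b, HasDerivWithinAt f (f' x) (Icc a b) x)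
    (hf' : ∀ x ∈ Ioo a b, 0 ≤ f' x) : MonotoneOn f (Icc a b) := by
  refine monotoneOn_of_hasDerivWithinAt_nonneg (convex_Icc a b)
    (fun x hx => (hf x hx).continuousWithinAt) (fun x hx => ?_) (by simpa only [interior_Icc])
  rw [interior_Icc] at hx ⊢
  exact (hf x (Ioo_subset_Icc_self hx)).mono Ioo_subset_Icc_self

theorem monotoneOn_Icc_of_deriv_left_eq_zero_of_second_deriv_nonneg {f f' f'' : ℝ → ℝ}
    {a b : ℝ} (hf : ∀ x ∈ Icc a b, HasDerivWithinAt f (f' x) (Icc a b) x)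
    (hf' : ∀ x ∈ Icc a b, HasDerivWithinAt f' (f'' x) (Icc a b) x)
    (hf'a : f' a = 0) (hf'' : ∀ x ∈ Ioo a b, 0 ≤ f'' x) : MonotoneOn f (Icc a b) :=
  monotoneOn_Icc_of_hasDerivWithinAt_nonneg hf fun _ hx =>
    hf'a ▸ monotoneOn_Icc_of_hasDerivWithinAt_nonneg hf' hf''
      (left_mem_Icc.2 (hx.1.trans hx.2).le) (Ioo_subset_Icc_self hx) hx.1.le

theorem neg_mul_le_real_inner_of_norm_le {E : Type*} [NormedAddCommGroup E]
    [InnerProductSpace ℝ E] {x y : E} {r c : ℝ} (hx : ‖x‖ ≤ r) (hy : ‖y‖ ≤ c) :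
    -(r * c) ≤ ⟪x, y⟫ :=
  calc -(r * c) ≤ -(‖x‖ * ‖y‖) :=
        neg_le_neg (mul_le_mul hx hy (norm_nonneg _) ((norm_nonneg _).trans hx))
    _ ≤ -|⟪x, y⟫| := neg_le_neg (abs_real_inner_le_norm x y)
    _ ≤ ⟪x, y⟫ := neg_abs_le _

theorem norm_sub_le_add_of_norm_deriv_le_one {E : Type*} [NormedAddCommGroup E]
    [NormedSpace ℝ E] {f f' : ℝ → E} {a t : ℝ}
    (hf : ∀ x ∈ Icc 0 a, HasDerivWithinAt f (f' x) (Icc 0 a) x)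
    (hf' : ∀ x ∈ Ico 0 a, ‖f' x‖ ≤ 1) (q : E) (ht : t ∈ Icc 0 a) :
    ‖f t - q‖ ≤ t + ‖f 0 - q‖ :=
  calc ‖f t - q‖ = ‖(f t - f 0) + (f 0 - q)‖ := by rw [sub_add_sub_cancel]
    _ ≤ ‖f t - f 0‖ + ‖f 0 - q‖ := norm_add_le _ _
    _ ≤ t + ‖f 0 - q‖ := by
      gcongr
      simpa using norm_image_sub_le_of_norm_deriv_le_segment' hf hf' t ht

theorem stmt8_general {E : Type*} [NormedAddCommGroup E] [InnerProductSpace ℝ E]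
    {a : ℝ} (γ γ' γ'' : ℝ → E) (p : E)
    (hderiv1 : ∀ s ∈ Icc (0:ℝ) a, HasDerivWithinAt γ (γ' s) (Icc 0 a) s)
    (hderiv2 : ∀ s ∈ Icc (0:ℝ) a, HasDerivWithinAt γ' (γ'' s) (Icc 0 a) s)
    (hunit : ∀ s ∈ Icc (0:ℝ) a, ‖γ' s‖ = 1)
    (hstart : γ 0 = p)
    (ν : E) (hν : ‖ν‖ = 1) (hperp : ⟪γ' 0, ν⟫ = 0)
    {κ : ℝ} (hcurv : ∀ s ∈ Icc (0:ℝ) a, ‖γ'' s‖ ≤ κ)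
    {R : ℝ} (haR : a ≤ R) (hRκ : 2 * R * κ < 1) :
    ∀ s ∈ Icc (0:ℝ) a, R ≤ ‖γ s - (p - R • ν)‖ := by
  intro s hs
  have hR : 0 ≤ R := hs.1.trans (hs.2.trans haR)
  set q := p - R • ν
  have hγ0 : γ 0 - q = R • ν := by simp [q, hstart]
  have hRν : ‖R • ν‖ = R := by rw [norm_smul, hν, mul_one, Real.norm_of_nonneg hR]
  have hdist (t : ℝ) (ht : t ∈ Icc 0 a) : ‖γ t - q‖ ≤ 2 * R :=
    (norm_sub_le_add_of_norm_deriv_le_one hderiv1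
      (fun x hx => (hunit x (Ico_subset_Icc_self hx)).le) q ht).trans
      (by rw [hγ0, hRν]; linarith [ht.2])
  have hsq : ‖γ 0 - q‖ ^ 2 ≤ ‖γ s - q‖ ^ 2 :=
    monotoneOn_Icc_of_deriv_left_eq_zero_of_second_deriv_nonneg
      (fun t ht => ((hderiv1 t ht).sub_const q).norm_sq)
      (fun t ht => (((hderiv1 t ht).sub_const q).inner ℝ (hderiv2 t ht)).const_mul 2)
      (by rw [hγ0, real_inner_smul_left, real_inner_comm, hperp, mul_zero, mul_zero])
      (fun t ht => by
        have ht' := Ioo_subset_Icc_self ht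
        have hbend := neg_mul_le_real_inner_of_norm_le (hdist t ht') (hcurv t ht')
        rw [real_inner_self_eq_norm_sq, hunit t ht']
        linarith)
      (left_mem_Icc.2 (hs.1.trans hs.2)) hs hs.1
  rw [hγ0, hRν] at hsq
  exact (pow_le_pow_iff_left₀ hR (norm_nonneg _) two_ne_zero).1 hsq

/-- A unit-speed, twice continuously differentiable curve
`γ : [0, a] → E` starting at `p` with `γ'(0) ⊥ ν` and curvature `‖γ''‖ ≤ κ`
never enters the open ball of radius `R` centered at `p - R • ν`, provided
`a ≤ R` and `2 R κ < 1`. -/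
theorem stmt8 {E : Type*} [NormedAddCommGroup E] [InnerProductSpace ℝ E]
    [FiniteDimensional ℝ E]
    {a : ℝ} (ha : 0 < a) (γ γ' γ'' : ℝ → E) (p : E)
    (hderiv1 : ∀ s ∈ Icc (0:ℝ) a, HasDerivWithinAt γ (γ' s) (Icc 0 a) s)
    (hderiv2 : ∀ s ∈ Icc (0:ℝ) a, HasDerivWithinAt γ' (γ'' s) (Icc 0 a) s)
    (hcont : ContinuousOn γ'' (Icc 0 a))
    (hunit : ∀ s ∈ Icc (0:ℝ) a, ‖γ' s‖ = 1)
    (hstart : γ 0 = p)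
    (ν : E) (hν : ‖ν‖ = 1) (hperp : ⟪γ' 0, ν⟫ = 0)
    {κ : ℝ} (hκ : 0 < κ) (hcurv : ∀ s ∈ Icc (0:ℝ) a, ‖γ'' s‖ ≤ κ)
    {R : ℝ} (hR : 0 < R) (haR : a ≤ R) (hRκ : 2 * R * κ < 1) :
    ∀ s ∈ Icc (0:ℝ) a, R ≤ ‖γ s - (p - R • ν)‖ :=
  stmt8_general γ γ' γ'' p hderiv1 hderiv2 hunit hstart ν hν hperp hcurv haR hRκ
end

section
/- Let E be a finite-dimensional real inner product space, a > 0, and let γ : [0, a] → E be a twice continuously differentiable curve parametrized by arc length with γ(0) = p. Let ν ∈ E be a unit vector with ⟨γ'(0), ν⟩ = 0. Suppose N : [0, a] → E is a differentiable map with ‖N(s)‖ = 1 for all s, N(0) = ν, and ‖N'(s)‖ ≤ C for all s, where a C ≤ 1/2; and suppose γ''(s) = −κ(s) N(s) for all s, where κ : [0, a] → ℝ satisfies κ(s) ≥ c ≥ 0 for all s. Then ⟨γ(s) − p, −ν⟩ ≥ (c/4) s² for all s ∈ [0, a]. -/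
open RealInnerProductSpace Set

/-!
Along `γ` the height `k s = ⟪γ s - p, -ν⟫` has `k 0 = k' 0 = 0` and
`k'' = κ ⟪N, ν⟫`. Since `N` moves with speed at most `C` away from `N 0 = ν`, we have
`⟪N s, ν⟫ ≥ 1 - C s ≥ 1/2`, so `k'' ≥ c/2`, and integrating twice gives `k s ≥ (c/4) s²`.
-/

theorem HasDerivWithinAt.inner_const {E : Type*} [NormedAddCommGroup E] [InnerProductSpace ℝ E]
    {f : ℝ → E} {f' : E} {s : Set ℝ} {x : ℝ} (hf : HasDerivWithinAt f f' s x) (v : E) :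
    HasDerivWithinAt (fun t => ⟪f t, v⟫) ⟪f', v⟫ s x := by
  simpa using hf.inner ℝ (hasDerivWithinAt_const x s v)

theorem sub_le_sub_of_hasDerivWithinAt_le {f f' g g' : ℝ → ℝ} {a b : ℝ}
    (hf : ∀ x ∈ Icc a b, HasDerivWithinAt f (f' x) (Icc a b) x)
    (hg : ∀ x ∈ Icc a b, HasDerivWithinAt g (g' x) (Icc a b) x)
    (hle : ∀ x ∈ Icc a b, f' x ≤ g' x) {x : ℝ} (hx : x ∈ Icc a b) :
    f x - f a ≤ g x - g a := by
  have hdiff : ∀ y ∈ Icc a b, HasDerivWithinAt (g - f) (g' y - f' y) (Icc a b) y :=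
    fun y hy => (hg y hy).sub (hf y hy)
  have hmono : MonotoneOn (g - f) (Icc a b) :=
    monotoneOn_of_hasDerivWithinAt_nonneg (convex_Icc a b)
      (fun y hy => (hdiff y hy).continuousWithinAt)
      (fun y hy => (hdiff y (interior_subset hy)).mono interior_subset)
      (fun y hy => sub_nonneg.2 (hle y (interior_subset hy)))
  have := hmono (left_mem_Icc.2 (hx.1.trans hx.2)) hx hx.1
  simp only [Pi.sub_apply] at this
  linarith

theorem mul_sq_le_of_hasDerivWithinAt_of_le {k k' k'' : ℝ → ℝ} {a m : ℝ}
    (hk : ∀ s ∈ Icc 0 a, HasDerivWithinAt k (k' s) (Icc 0 a) s)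
    (hk' : ∀ s ∈ Icc 0 a, HasDerivWithinAt k' (k'' s) (Icc 0 a) s)
    (hk0 : k 0 = 0) (hk'0 : k' 0 = 0) (hm : ∀ s ∈ Icc 0 a, m ≤ k'' s) :
    ∀ s ∈ Icc 0 a, m / 2 * s ^ 2 ≤ k s := by
  have hlin : ∀ s ∈ Icc 0 a, HasDerivWithinAt (fun t => m * t) m (Icc 0 a) s :=
    fun s _ => by simpa using (hasDerivWithinAt_id s (Icc 0 a)).const_mul m
  have hquad : ∀ s ∈ Icc 0 a, HasDerivWithinAt (fun t => m / 2 * t ^ 2) (m * s) (Icc 0 a) s :=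
    fun s _ => (((hasDerivAt_pow 2 s).const_mul (m / 2)).hasDerivWithinAt).congr_deriv (by ring)
  have hk'_ge : ∀ s ∈ Icc 0 a, m * s ≤ k' s := fun s hs => by
    simpa [hk'0] using sub_le_sub_of_hasDerivWithinAt_le hlin hk' hm hs
  intro s hs
  simpa [hk0] using sub_le_sub_of_hasDerivWithinAt_le hquad hk hk'_ge hs

theorem one_sub_mul_le_inner_of_norm_deriv_le {E : Type*} [NormedAddCommGroup E]
    [InnerProductSpace ℝ E] {N N' : ℝ → E} {a C : ℝ}
    (hN : ∀ s ∈ Icc 0 a, HasDerivWithinAt N (N' s) (Icc 0 a) s)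
    (hN' : ∀ s ∈ Icc 0 a, ‖N' s‖ ≤ C) (hN0 : ‖N 0‖ = 1) :
    ∀ s ∈ Icc 0 a, 1 - C * s ≤ ⟪N s, N 0⟫ := by
  intro s hs
  have hdist : ‖N s - N 0‖ ≤ C * s := by
    simpa [abs_of_nonneg hs.1] using (convex_Icc 0 a).norm_image_sub_le_of_norm_hasDerivWithin_le
      hN hN' (left_mem_Icc.2 (hs.1.trans hs.2)) hs
  have hinner : ⟪N s, N 0⟫ = 1 + ⟪N s - N 0, N 0⟫ := by
    rw [inner_sub_left, real_inner_self_eq_norm_sq, hN0]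
    ring
  have hcs := neg_le_of_abs_le (abs_real_inner_le_norm (N s - N 0) (N 0))
  rw [hN0, mul_one] at hcs
  linarith

theorem stmt9_general {E : Type*} [NormedAddCommGroup E] [InnerProductSpace ℝ E]
    {a : ℝ} (γ γ' γ'' : ℝ → E) (p : E)
    (hderiv1 : ∀ s ∈ Icc (0:ℝ) a, HasDerivWithinAt γ (γ' s) (Icc 0 a) s)
    (hderiv2 : ∀ s ∈ Icc (0:ℝ) a, HasDerivWithinAt γ' (γ'' s) (Icc 0 a) s)
    (hstart : γ 0 = p)
    (ν : E) (hν : ‖ν‖ = 1) (hperp : ⟪γ' 0, ν⟫ = 0)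
    (N N' : ℝ → E)
    (hN : ∀ s ∈ Icc (0:ℝ) a, HasDerivWithinAt N (N' s) (Icc 0 a) s)
    (hN0 : N 0 = ν)
    {C : ℝ} (hNder : ∀ s ∈ Icc (0:ℝ) a, ‖N' s‖ ≤ C) (haC : a * C ≤ 1 / 2)
    (κ : ℝ → ℝ) (hγ'' : ∀ s ∈ Icc (0:ℝ) a, γ'' s = -(κ s) • N s)
    {c : ℝ} (hc : 0 ≤ c) (hκ : ∀ s ∈ Icc (0:ℝ) a, c ≤ κ s) :
    ∀ s ∈ Icc (0:ℝ) a, c / 4 * s ^ 2 ≤ ⟪γ s - p, -ν⟫ := by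
  have hNν : ∀ s ∈ Icc (0:ℝ) a, 1 / 2 ≤ ⟪N s, ν⟫ := fun s hs => by
    have hC : 0 ≤ C := (norm_nonneg _).trans (hNder s hs)
    have := one_sub_mul_le_inner_of_norm_deriv_le hN hNder (hN0 ▸ hν) s hs
    rw [hN0] at this
    nlinarith [hs.2]
  have hk'' : ∀ s ∈ Icc (0:ℝ) a, c / 2 ≤ ⟪γ'' s, -ν⟫ := fun s hs => by
    rw [hγ'' s hs, inner_neg_right, real_inner_smul_left, neg_mul, neg_neg]
    nlinarith [hNν s hs, hκ s hs]
  have hheight := mul_sq_le_of_hasDerivWithinAt_of_le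
    (fun s hs => ((hderiv1 s hs).sub_const p).inner_const (-ν))
    (fun s hs => (hderiv2 s hs).inner_const (-ν))
    (by simp [hstart]) (by simp [inner_neg_right, hperp]) hk''
  intro s hs
  simpa [div_div, show (2:ℝ) * 2 = 4 by norm_num] using hheight s hs

/-- Height estimate: a unit-speed, twice continuously differentiable
curve `γ : [0, a] → E` starting at `p`, with `γ'(0) ⊥ ν`, with a unit "normal"
field `N` satisfying `N 0 = ν`, `‖N'‖ ≤ C`, `a C ≤ 1/2`, and `γ'' = -κ • N` with
`κ ≥ c ≥ 0`, satisfies `⟪γ(s) - p, -ν⟫ ≥ (c/4) s²` for all `s ∈ [0, a]`. -/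
theorem stmt9 {E : Type*} [NormedAddCommGroup E] [InnerProductSpace ℝ E]
    [FiniteDimensional ℝ E]
    {a : ℝ} (ha : 0 < a) (γ γ' γ'' : ℝ → E) (p : E)
    (hderiv1 : ∀ s ∈ Icc (0:ℝ) a, HasDerivWithinAt γ (γ' s) (Icc 0 a) s)
    (hderiv2 : ∀ s ∈ Icc (0:ℝ) a, HasDerivWithinAt γ' (γ'' s) (Icc 0 a) s)
    (hcont : ContinuousOn γ'' (Icc 0 a))
    (hunit : ∀ s ∈ Icc (0:ℝ) a, ‖γ' s‖ = 1)
    (hstart : γ 0 = p)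
    (ν : E) (hν : ‖ν‖ = 1) (hperp : ⟪γ' 0, ν⟫ = 0)
    (N N' : ℝ → E)
    (hN : ∀ s ∈ Icc (0:ℝ) a, HasDerivWithinAt N (N' s) (Icc 0 a) s)
    (hNunit : ∀ s ∈ Icc (0:ℝ) a, ‖N s‖ = 1) (hN0 : N 0 = ν)
    {C : ℝ} (hNder : ∀ s ∈ Icc (0:ℝ) a, ‖N' s‖ ≤ C) (haC : a * C ≤ 1 / 2)
    (κ : ℝ → ℝ) (hγ'' : ∀ s ∈ Icc (0:ℝ) a, γ'' s = -(κ s) • N s)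
    {c : ℝ} (hc : 0 ≤ c) (hκ : ∀ s ∈ Icc (0:ℝ) a, c ≤ κ s) :
    ∀ s ∈ Icc (0:ℝ) a, c / 4 * s ^ 2 ≤ ⟪γ s - p, -ν⟫ :=
  stmt9_general γ γ' γ'' p hderiv1 hderiv2 hstart ν hν hperp N N' hN hN0 hNder haC κ hγ'' hc hκ
end
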